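/- arXiv:1903.11578 — 3 statements merged into one kernel-verified Lean document; each statement's English description precedes it below -/
import Mathlib

section
/- For every commutative ring R, every family w : ℤ → R, every integer j ≥ 1 and every n ∈ ℤ, the identity m_{j,0}(n) = m_{j-1,-2}(n) + m_{j-1,-2}(n+2) + (w_{n+1} + w_n) m_{j-1,0}(n) holds. -/
/-- Coefficients `m_{j,k}(n)` of the powers `L^j = Σ_k m_{j,k}(n) Λ^k` of the
difference operator `L = Λ² + (w_{n+1} + w_n) + w_n w_{n-1} Λ⁻²`,
defined by the recursion from the context (natural-number power index). -/
def mAux {R : Type*} [CommRing R] (w : ℤ → R) : ℕ → ℤ → ℤ → R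
  | 0, k, _ => if k = 0 then 1 else 0
  | j + 1, k, n =>
      mAux w j (k - 2) n + (w (n + k + 1) + w (n + k)) * mAux w j k n +
        w (n + k + 2) * w (n + k + 1) * mAux w j (k + 2) n

/-- `mCoef w j k n` is `m_{j,k}(n)` for an integer `j` (meaningful for `j ≥ 0`). -/
def mCoef {R : Type*} [CommRing R] (w : ℤ → R) (j k n : ℤ) : R := mAux w j.toNat k n

/-- Product `w(n+1) ⋯ w(n+2k)`. -/
def prodW {R : Type*} [CommRing R] (w : ℤ → R) : ℕ → ℤ → R
  | 0, _ => 1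
  | k + 1, n => w (n + 2 * k + 2) * w (n + 2 * k + 1) * prodW w k n

/-- The "other-side" recursion, from `L^{j+1} = L ⬝ L^j`. -/
lemma mAux_alt {R : Type*} [CommRing R] (w : ℤ → R) (j : ℕ) :
    ∀ k n : ℤ, mAux w (j + 1) k n =
      mAux w j (k - 2) (n + 2) + (w (n + 1) + w n) * mAux w j k n +
        w n * w (n - 1) * mAux w j (k + 2) (n - 2) := by
  induction j with
  | zero =>
      intro k n
      have hsplit : k = 0 ∨ k = 2 ∨ k = -2 ∨ (k - 2 ≠ 0 ∧ k ≠ 0 ∧ k + 2 ≠ 0) := by omega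
      rcases hsplit with rfl | rfl | rfl | ⟨h1, h2, h3⟩
      · simp only [mAux]; norm_num
      · simp only [mAux]; norm_num
      · simp only [mAux]; norm_num; ring
      · simp only [mAux, if_neg h1, if_neg h2, if_neg h3]; ring
  | succ j ih =>
      intro k n
      rw [show mAux w (j + 1 + 1) k n =
        mAux w (j + 1) (k - 2) n + (w (n + k + 1) + w (n + k)) * mAux w (j + 1) k n +
          w (n + k + 2) * w (n + k + 1) * mAux w (j + 1) (k + 2) n from rfl]
      conv_rhs =>
        rw [show mAux w (j + 1) (k - 2) (n + 2) =
          mAux w j (k - 2 - 2) (n + 2) + (w (n + 2 + (k - 2) + 1) + w (n + 2 + (k - 2))) *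
            mAux w j (k - 2) (n + 2) +
            w (n + 2 + (k - 2) + 2) * w (n + 2 + (k - 2) + 1) * mAux w j (k - 2 + 2) (n + 2)
            from rfl]
        rw [show mAux w (j + 1) k n =
          mAux w j (k - 2) n + (w (n + k + 1) + w (n + k)) * mAux w j k n +
            w (n + k + 2) * w (n + k + 1) * mAux w j (k + 2) n from rfl]
        rw [show mAux w (j + 1) (k + 2) (n - 2) =
          mAux w j (k + 2 - 2) (n - 2) + (w (n - 2 + (k + 2) + 1) + w (n - 2 + (k + 2))) *
            mAux w j (k + 2) (n - 2) +
            w (n - 2 + (k + 2) + 2) * w (n - 2 + (k + 2) + 1) * mAux w j (k + 2 + 2) (n - 2)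
            from rfl]
      rw [ih (k - 2) n, ih k n, ih (k + 2) n]
      ring_nf

/-- Symmetry: `w(n+1)⋯w(n+2k) · m_{j,2k}(n) = m_{j,-2k}(n+2k)`. -/
lemma mAux_symm {R : Type*} [CommRing R] (w : ℤ → R) (j : ℕ) :
    ∀ (k : ℕ) (n : ℤ), prodW w k n * mAux w j (2 * k) n = mAux w j (-(2 * k)) (n + 2 * k) := by
  induction j with
  | zero =>
      intro k n
      cases k with
      | zero => simp [mAux, prodW]
      | succ k =>
          have h1 : (2 * ((k : ℤ) + 1)) ≠ 0 := by omega
          have h2 : (-(2 * ((k : ℤ) + 1))) ≠ 0 := by omega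
          simp only [mAux]
          push_cast
          rw [if_neg h1, if_neg h2]
          ring
  | succ j ih =>
      intro k n
      cases k with
      | zero =>
          simp only [prodW, Nat.cast_zero, mul_zero, neg_zero, one_mul, add_zero]
      | succ k =>
          have e1 := ih k n
          have e2 := ih (k + 1) n
          have e3 := ih (k + 2) n
          push_cast at e1 e2 e3 ⊢
          rw [show mAux w (j + 1) (2 * ((k : ℤ) + 1)) n =
            mAux w j (2 * ((k : ℤ) + 1) - 2) n +
              (w (n + 2 * ((k : ℤ) + 1) + 1) + w (n + 2 * ((k : ℤ) + 1))) *
                mAux w j (2 * ((k : ℤ) + 1)) n +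
              w (n + 2 * ((k : ℤ) + 1) + 2) * w (n + 2 * ((k : ℤ) + 1) + 1) *
                mAux w j (2 * ((k : ℤ) + 1) + 2) n from rfl]
          rw [mAux_alt w j (-(2 * ((k : ℤ) + 1))) (n + 2 * ((k : ℤ) + 1))]
          simp only [prodW] at e2 e3 ⊢
          push_cast at e2 e3 ⊢
          ring_nf
          ring_nf at e1 e2 e3
          linear_combination (norm := ring_nf)
            (w (n + 2 * (k : ℤ) + 3) + w (n + 2 * (k : ℤ) + 2)) * e2 +
              w (n + 2 * (k : ℤ) + 2) * w (n + 2 * (k : ℤ) + 1) * e1 + e3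

theorem mCoef_zero_recursion (R : Type*) [CommRing R] (w : ℤ → R) (j : ℤ) (hj : 1 ≤ j) (n : ℤ) :
    mCoef w j 0 n =
      mCoef w (j - 1) (-2) n + mCoef w (j - 1) (-2) (n + 2) +
        (w (n + 1) + w n) * mCoef w (j - 1) 0 n := by
  set t : ℕ := (j - 1).toNat with ht
  have hjt : j.toNat = t + 1 := by omega
  have hj1 : (j - 1).toNat = t := rfl
  unfold mCoef
  rw [hjt, hj1]
  have hs := mAux_symm w t 1 n
  simp only [prodW] at hs
  push_cast at hs
  rw [show mAux w (t + 1) 0 n =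
    mAux w t (0 - 2) n + (w (n + 0 + 1) + w (n + 0)) * mAux w t 0 n +
      w (n + 0 + 2) * w (n + 0 + 1) * mAux w t 2 n from rfl]
  ring_nf
  ring_nf at hs
  linear_combination (norm := ring_nf) hs
end

section
/- (Determinant of the basic resolvent vanishes, coefficient form.) For every commutative ring R, every family w : ℤ → R, every integer j ≥ 1 and every n ∈ ℤ, the quadratic identity m_{j,-2}(n) = Σ_{i=0}^{j-1} ( w_n w_{n-1} m_{i,0}(n) m_{j-1-i,0}(n−2) − m_{i,-2}(n) m_{j-1-i,-2}(n) ) holds. -/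
open Finset

lemma prod_range_two_mul_succ {M : Type*} [CommMonoid M] (f : ℤ → M) (n : ℤ) (e : ℕ) :
    ∏ t ∈ range (2 * (e + 1)), f (n - t) =
      (∏ t ∈ range (2 * e), f (n - t)) * (f (n - 2 * e) * f (n - 2 * e - 1)) := by
  rw [show 2 * (e + 1) = 2 * e + 1 + 1 by ring, prod_range_succ, prod_range_succ]
  push_cast
  rw [sub_add_eq_sub_sub, mul_assoc]

section
variable {R : Type*} [CommRing R] (w : ℤ → R)

@[simp]
lemma mAux_zero (k n : ℤ) : mAux w 0 k n = if k = 0 then 1 else 0 := rfl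

lemma mAux_succ (j : ℕ) (k n : ℤ) :
    mAux w (j + 1) k n = mAux w j (k - 2) n + (w (n + k + 1) + w (n + k)) * mAux w j k n +
      w (n + k + 2) * w (n + k + 1) * mAux w j (k + 2) n := rfl

lemma mAux_succ_left (j : ℕ) (k n : ℤ) :
    mAux w (j + 1) k n = mAux w j (k - 2) (n + 2) + (w (n + 1) + w n) * mAux w j k n +
      w n * w (n - 1) * mAux w j (k + 2) (n - 2) := by
  induction j generalizing k n with
  | zero =>
    obtain rfl | rfl | rfl | ⟨_, _, _⟩ :
        k = 2 ∨ k = 0 ∨ k = -2 ∨ (k ≠ 2 ∧ k ≠ 0 ∧ k ≠ -2) := by omega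
    · simp [mAux_succ]
    · simp [mAux_succ]
    · simp [mAux_succ]
      ring_nf
    · simp (disch := omega) [mAux_succ, if_neg]
  | succ j ih =>
    conv_lhs => rw [mAux_succ, ih (k - 2) n, ih k n, ih (k + 2) n]
    conv_rhs => rw [mAux_succ w j (k - 2), mAux_succ w j k, mAux_succ w j (k + 2)]
    ring_nf

lemma mAux_neg_two_mul (l d : ℕ) (n : ℤ) :
    mAux w l (-(2 * d)) n =
      (∏ t ∈ range (2 * d), w (n - t)) * mAux w l (2 * d) (n - 2 * d) := by
  induction l generalizing d n with
  | zero =>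
    rcases d with _ | e
    · simp
    · simp [show (e : ℤ) + 1 ≠ 0 by omega]
  | succ l ih =>
    rcases d with _ | e
    · simp
    have h₀ := ih e n
    have h₁ := ih (e + 1) n
    have h₂ := ih (e + 2) n
    rw [prod_range_two_mul_succ] at h₁ ⊢
    rw [prod_range_two_mul_succ, prod_range_two_mul_succ] at h₂
    rw [mAux_succ, mAux_succ_left]
    push_cast at h₁ h₂ ⊢
    -- the right recursion at `-2(e+1)` is the weight `∏_{t<2e+2}` times the left one at `2(e+1)`
    linear_combination (norm := ring_nf) h₂ + (w (n - 2 * e - 1) + w (n - 2 * e - 2)) * h₁ +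
      w (n - 2 * e) * w (n - 2 * e - 1) * h₀

lemma mAux_neg_two (l : ℕ) (n : ℤ) :
    mAux w l (-2) n = w n * w (n - 1) * mAux w l 2 (n - 2) := by
  simpa [prod_range_succ] using mAux_neg_two_mul w l 1 n

def detCoeff (k : ℤ) (j : ℕ) (n : ℤ) : R :=
  ∑ p ∈ antidiagonal j,
    (w n * w (n - 1) * mAux w p.1 0 n * mAux w p.2 (k + 2) (n - 2) -
      mAux w p.1 (-2) n * mAux w p.2 k n)

lemma detCoeff_succ (k : ℤ) (j : ℕ) (n : ℤ) :
    detCoeff w k (j + 1) n =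
      (w n * w (n - 1) * mAux w (j + 1) 0 n * mAux w 0 (k + 2) (n - 2) -
          mAux w (j + 1) (-2) n * mAux w 0 k n) +
        detCoeff w (k - 2) j n + (w (n + k + 1) + w (n + k)) * detCoeff w k j n +
        w (n + k + 2) * w (n + k + 1) * detCoeff w (k + 2) j n := by
  rw [detCoeff, Nat.sum_antidiagonal_succ', add_assoc, add_assoc]
  congr 1
  simp only [detCoeff, mul_sum, ← sum_add_distrib]
  refine sum_congr rfl fun p _ => ?_
  rw [mAux_succ, mAux_succ]
  ring_nf

lemma detCoeff_zero (j : ℕ) (n : ℤ) : detCoeff w 0 j n = 0 := by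
  have hswap : ∀ p ∈ antidiagonal j,
      w n * w (n - 1) * mAux w p.1 0 n * mAux w p.2 (0 + 2) (n - 2) -
          mAux w p.1 (-2) n * mAux w p.2 0 n =
        mAux w p.swap.1 (-2) n * mAux w p.swap.2 0 n - mAux w p.1 (-2) n * mAux w p.2 0 n := by
    intro p _
    rw [Prod.fst_swap, Prod.snd_swap, mAux_neg_two w p.2, zero_add]
    ring
  rw [detCoeff, sum_congr rfl hswap, sum_sub_distrib,
    Nat.sum_antidiagonal_swap (f := fun p => mAux w p.1 (-2) n * mAux w p.2 0 n), sub_self]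

lemma detCoeff_eq_mAux_succ {k : ℤ} (hk : Even k) (hle : k ≤ -2) (j : ℕ) (n : ℤ) :
    detCoeff w k j n = mAux w (j + 1) k n := by
  induction j generalizing k with
  | zero =>
    rcases eq_or_lt_of_le hle with rfl | hle
    · simp [detCoeff, mAux_succ]
      ring_nf
    · simp (disch := omega) [detCoeff, mAux_succ, if_neg]
  | succ j ih =>
    rw [detCoeff_succ, mAux_succ w (j + 1), ih (hk.sub even_two) (by omega), ih hk hle]
    rcases eq_or_lt_of_le hle with rfl | hle
    · simp [detCoeff_zero]
      ring_nf
    · have hle₂ : k + 2 ≤ -2 := by obtain ⟨r, rfl⟩ := hk; omega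
      rw [ih (hk.add even_two) hle₂]
      simp (disch := omega) [if_neg]
end

open Finset in
theorem det_resolvent_vanishes (R : Type*) [CommRing R] (w : ℤ → R) (j : ℤ) (hj : 1 ≤ j)
    (n : ℤ) :
    mCoef w j (-2) n =
      ∑ i ∈ Finset.Icc (0 : ℤ) (j - 1),
        (w n * w (n - 1) * mCoef w i 0 n * mCoef w (j - 1 - i) 0 (n - 2) -
          mCoef w i (-2) n * mCoef w (j - 1 - i) (-2) n) := by
  obtain ⟨N, rfl⟩ : ∃ N : ℕ, j = N + 1 := ⟨(j - 1).toNat, by omega⟩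
  rw [add_sub_cancel_right]
  change mAux w (N + 1) (-2) n = _
  rw [← detCoeff_eq_mAux_succ w even_neg_two le_rfl N n]
  refine (sum_nbij' (fun i : ℤ => (i.toNat, (N - i).toNat)) (fun p : ℕ × ℕ => (p.1 : ℤ))
    ?_ ?_ ?_ ?_ fun i _ => rfl).symm <;> simp <;> omega
end

section
/- For every commutative ring R, every family w : ℤ → R, every integer j ≥ 1 and every n ∈ ℤ, the identity m_{j,-2}(n) = A_{2j,-1}(n−1) − w_{n-1} ( A_{2j-2,-1}(n−1) + A_{2j-2,-1}(n−2) ) holds. (This is the coefficient form of the relation α_n(λ^2) = A_{n-1}(λ) − (w_{n-1}/λ^2)(A_{n-1}(λ) + A_{n-2}(λ) + 1) between the (1,1)-entry α of the discrete KdV basic resolvent, whose coefficients are m_{j,-2}(n), and the Toda resolvent series A_n(λ) = Σ_{ℓ≥0} A_{ℓ-1,-1}(n) λ^{-ℓ-1}.) -/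
def aAux {R : Type*} [CommRing R] (w : ℤ → R) : ℕ → ℤ → ℤ → R
  | 0, k, _ => if k = 0 then 1 else 0
  | l + 1, k, n => aAux w l (k - 1) n + w (n + k + 1) * aAux w l (k + 1) n

def aCoef {R : Type*} [CommRing R] (w : ℤ → R) (l k n : ℤ) : R := aAux w (l + 1).toNat k n

lemma aAux_left {R : Type*} [CommRing R] (w : ℤ → R) (l : ℕ) :
    ∀ k n : ℤ, aAux w (l + 1) k n = aAux w l (k - 1) (n + 1) + w n * aAux w l (k + 1) (n - 1) := by
  induction l with
  | zero =>
    intro k n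
    simp only [aAux]
    by_cases h : k = -1
    · subst h; norm_num
    · rw [if_neg (show ¬(k + 1 = 0) by omega)]; ring_nf
  | succ l ih =>
    intro k n
    show aAux w (l+1) (k-1) n + w (n + k + 1) * aAux w (l+1) (k+1) n = _
    rw [ih (k-1) n, ih (k+1) n]
    show _ = (aAux w l (k-1-1) (n+1) + w (n+1+(k-1)+1) * aAux w l (k-1+1) (n+1))
        + w n * (aAux w l (k+1-1) (n-1) + w (n-1+(k+1)+1) * aAux w l (k+1+1) (n-1))
    have e1 : n+1+(k-1)+1 = n+k+1 := by ring
    have e2 : n-1+(k+1)+1 = n+k+1 := by ring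
    rw [e1, e2]
    ring_nf

lemma aAux_sym {R : Type*} [CommRing R] (w : ℤ → R) (l : ℕ) :
    ∀ (k : ℕ) (n : ℤ),
      (∏ i ∈ Finset.range k, w (n + i + 1)) * aAux w l k n = aAux w l (-(k : ℤ)) (n + k) := by
  induction l with
  | zero =>
    intro k n
    cases k with
    | zero => simp [aAux]
    | succ k' =>
      simp only [aAux]
      rw [if_neg (by omega), if_neg (by omega)]
      ring
  | succ l ih =>
    intro k n
    cases k with
    | zero => simp
    | succ k' =>
      have hl : aAux w (l + 1) (-((k' + 1 : ℕ) : ℤ)) (n + (k' + 1 : ℕ)) =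
          aAux w l (-((k' + 1 : ℕ) : ℤ) - 1) (n + (k' + 1 : ℕ) + 1) +
            w (n + (k' + 1 : ℕ)) * aAux w l (-((k' + 1 : ℕ) : ℤ) + 1) (n + (k' + 1 : ℕ) - 1) :=
        aAux_left w l _ _
      rw [hl]
      show (∏ i ∈ Finset.range (k'+1), w (n + i + 1)) *
          (aAux w l ((k'+1:ℕ) - 1) n + w (n + (k'+1:ℕ) + 1) * aAux w l ((k'+1:ℕ) + 1) n) = _
      have h1 := ih (k' + 2) n
      have h2 := ih k' n
      have e1 : ((k'+1:ℕ):ℤ) - 1 = (k' : ℕ) := by push_cast; ring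
      have e2 : ((k'+1:ℕ):ℤ) + 1 = ((k'+2:ℕ):ℤ) := by push_cast; ring
      have e3 : -((k'+1:ℕ):ℤ) - 1 = -((k'+2:ℕ):ℤ) := by push_cast; ring
      have e4 : n + ((k'+1:ℕ):ℤ) + 1 = n + ((k'+2:ℕ):ℤ) := by push_cast; ring
      have e5 : -((k'+1:ℕ):ℤ) + 1 = -((k':ℕ):ℤ) := by push_cast; ring
      have e6 : n + ((k'+1:ℕ):ℤ) - 1 = n + ((k':ℕ):ℤ) := by push_cast; ring
      rw [e1, e2, e3, e4, e5, e6, ← h1, ← h2]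
      rw [Finset.prod_range_succ, Finset.prod_range_succ (n := k' + 1), Finset.prod_range_succ]
      push_cast
      generalize (∏ i ∈ Finset.range k', w (n + (i : ℤ) + 1)) = Pk
      ring

lemma mAux_eq_aAux {R : Type*} [CommRing R] (w : ℤ → R) (j : ℕ) :
    ∀ k n : ℤ, mAux w j k n = aAux w (2 * j) k n := by
  induction j with
  | zero => intro k n; rfl
  | succ j ih =>
    intro k n
    have : 2 * (j + 1) = (2 * j + 1) + 1 := by omega
    rw [this]
    show mAux w j (k-2) n + (w (n + k + 1) + w (n + k)) * mAux w j k n +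
        w (n + k + 2) * w (n + k + 1) * mAux w j (k + 2) n
      = aAux w (2*j+1) (k-1) n + w (n + k + 1) * aAux w (2*j+1) (k+1) n
    show _ = (aAux w (2*j) (k-1-1) n + w (n + (k-1) + 1) * aAux w (2*j) (k-1+1) n)
        + w (n + k + 1) * (aAux w (2*j) (k+1-1) n + w (n + (k+1) + 1) * aAux w (2*j) (k+1+1) n)
    have e1 : k - 1 - 1 = k - 2 := by ring
    have e2 : n + (k-1) + 1 = n + k := by ring
    have e3 : k - 1 + 1 = k := by ring
    have e4 : k + 1 - 1 = k := by ring
    have e5 : n + (k+1) + 1 = n + k + 2 := by ring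
    have e6 : k + 1 + 1 = k + 2 := by ring
    rw [e1, e2, e3, e4, e5, e6, ih (k-2) n, ih k n, ih (k+2) n]
    ring

theorem alpha_eq_A (R : Type*) [CommRing R] (w : ℤ → R) (j : ℤ) (hj : 1 ≤ j) (n : ℤ) :
    mCoef w j (-2) n =
      aCoef w (2 * j) (-1) (n - 1) -
        w (n - 1) * (aCoef w (2 * j - 2) (-1) (n - 1) + aCoef w (2 * j - 2) (-1) (n - 2)) := by
  obtain ⟨J, hJ⟩ : ∃ J : ℕ, j = (J : ℤ) + 1 := ⟨(j - 1).toNat, by omega⟩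
  subst hJ
  have h1 : ((J:ℤ) + 1).toNat = J + 1 := by omega
  have h2 : (2 * ((J:ℤ) + 1) + 1).toNat = 2 * J + 3 := by omega
  have h3 : (2 * ((J:ℤ) + 1) - 2 + 1).toNat = 2 * J + 1 := by omega
  rw [mCoef, aCoef, aCoef, aCoef, h1, h2, h3, mAux_eq_aAux]
  have hL : aAux w (2 * J + 3) (-1) (n - 1) =
      aAux w (2 * J + 2) (-2) n + w (n - 1) * aAux w (2 * J + 2) 0 (n - 2) := by
    have h := aAux_left w (2 * J + 2) (-1) (n - 1)
    rw [show (-1:ℤ) - 1 = -2 by ring, show (-1:ℤ) + 1 = 0 by ring,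
      show n - 1 + 1 = n by ring, show n - 1 - 1 = n - 2 by ring] at h
    exact h
  have hR : aAux w (2 * J + 2) 0 (n - 2) =
      aAux w (2 * J + 1) (-1) (n - 2) + w (n - 1) * aAux w (2 * J + 1) 1 (n - 2) := by
    show aAux w (2*J+1) (0-1) (n-2) + w (n - 2 + 0 + 1) * aAux w (2*J+1) (0+1) (n-2) = _
    rw [show (0:ℤ) - 1 = -1 by ring, show n - 2 + 0 + 1 = n - 1 by ring, show (0:ℤ) + 1 = 1 by ring]
  have hS : w (n - 1) * aAux w (2 * J + 1) 1 (n - 2) = aAux w (2 * J + 1) (-1) (n - 1) := by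
    have h := aAux_sym w (2 * J + 1) 1 (n - 2)
    simp only [Finset.prod_range_one, Nat.cast_zero, Nat.cast_one] at h
    rw [show n - 2 + (0:ℤ) + 1 = n - 1 by ring, show n - 2 + (1:ℤ) = n - 1 by ring] at h
    exact h
  have h2J : 2 * (J + 1) = 2 * J + 2 := by omega
  rw [h2J, hL, hR]
  rw [mul_add, mul_add, hS]
  ring
end
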